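/- Let D be a Δ-implication class of an edge-labelled graph such that D ≠ D⁻¹. Then D is transitive: if (a,b) ∈ D and (b,c) ∈ D, then (a,c) ∈ D. -/

import Mathlib

/-!
Graphs here are finite, undirected, without parallel edges, and have a loop at
every vertex.  We model them as symmetric reflexive relations.
-/

structure LoopGraph (V : Type) where
  Adj : V → V → Prop
  symm : ∀ u v, Adj u v → Adj v u
  refl : ∀ u, Adj u u

namespace LoopGraph

variable {V W : Type}

/-- Closed neighbourhood `N[u]`. -/
def nbhd (G : LoopGraph V) (u : V) : Set V := {v | G.Adj u v}

/-- `u` is a universal vertex. -/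
def Universal (G : LoopGraph V) (u : V) : Prop := ∀ v, G.Adj u v

/-- `u ≠ v` are true twins if `N[u] = N[v]`. -/
def TrueTwins (G : LoopGraph V) (u v : V) : Prop := u ≠ v ∧ G.nbhd u = G.nbhd v

/-- `uv` is an inclusion edge: it is an edge and `N[u] ⊆ N[v]` or `N[v] ⊆ N[u]`. -/
def InclusionEdge (G : LoopGraph V) (u v : V) : Prop :=
  G.Adj u v ∧ (G.nbhd u ⊆ G.nbhd v ∨ G.nbhd v ⊆ G.nbhd u)

/-- `u` overlaps `v`: they are adjacent and their closed neighbourhoods are incomparable. -/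
def Overlaps (G : LoopGraph V) (u v : V) : Prop :=
  G.Adj u v ∧ ¬ G.nbhd u ⊆ G.nbhd v ∧ ¬ G.nbhd v ⊆ G.nbhd u

/-- `{u,v}` is a spanning pair. -/
def SpanningPair (G : LoopGraph V) (u v : V) : Prop :=
  (∀ x, ¬ G.Adj v x → G.nbhd x ⊆ G.nbhd u) ∧
  (∀ y, ¬ G.Adj u y → G.nbhd y ⊆ G.nbhd v)

/-- `uv` is a 2-overlap edge: an overlap edge forming a spanning pair. -/
def TwoOverlapEdge (G : LoopGraph V) (u v : V) : Prop :=
  G.Overlaps u v ∧ G.SpanningPair u v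

/-- `uv` is a 1-overlap edge: an overlap edge not forming a spanning pair. -/
def OneOverlapEdge (G : LoopGraph V) (u v : V) : Prop :=
  G.Overlaps u v ∧ ¬ G.SpanningPair u v

/-- `{u,v}` is a circular pair: a non-adjacent spanning pair. -/
def CircularPair (G : LoopGraph V) (u v : V) : Prop :=
  G.SpanningPair u v ∧ ¬ G.Adj u v

/-- Every vertex belongs to some circular pair. -/
def CircularlyPaired (G : LoopGraph V) : Prop := ∀ u, ∃ v, G.CircularPair u v

/-- A walk with `k` edges: vertices `P 0, …, P k` with consecutive vertices adjacent. -/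
def IsWalk (G : LoopGraph V) (k : ℕ) (P : ℕ → V) : Prop :=
  ∀ i < k, G.Adj (P i) (P (i + 1))

/-- Vertex `z` avoids the edge `ab`: every neighbour of `z` among `a, b` overlaps `z`,
and if `z` overlaps both `a` and `b` then `a, b` do not overlap each other. -/
def AvoidsEdge (G : LoopGraph V) (z a b : V) : Prop :=
  (G.Adj z a → G.Overlaps z a) ∧ (G.Adj z b → G.Overlaps z b) ∧
  (G.Overlaps z a → G.Overlaps z b → ¬ G.Overlaps a b)

/-- Vertex `z` and the walk `P` (with `k` edges) avoid each other. -/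
def AvoidsWalk (G : LoopGraph V) (z : V) (k : ℕ) (P : ℕ → V) : Prop :=
  (∀ i ≤ k, G.Adj z (P i) → G.Overlaps z (P i)) ∧
  (∀ i < k, G.Overlaps z (P i) → G.Overlaps z (P (i + 1)) →
    ¬ G.Overlaps (P i) (P (i + 1)))

/-- The walks `P` and `Q` (both with `k` edges) avoid each other. -/
def WalksAvoid (G : LoopGraph V) (k : ℕ) (P Q : ℕ → V) : Prop :=
  ∀ i < k, G.AvoidsEdge (P i) (Q i) (Q (i + 1)) ∧ G.AvoidsEdge (Q (i + 1)) (P i) (P (i + 1))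

/-- `{x,y}` is a `z`-invertible pair, i.e. an invertible pair anchored at `z`. -/
def ZInvertiblePair (G : LoopGraph V) (z x y : V) : Prop :=
  x ≠ y ∧ x ≠ z ∧ y ≠ z ∧
  ∃ k, ∃ P Q : ℕ → V, G.IsWalk k P ∧ G.IsWalk k Q ∧
    P 0 = x ∧ P k = y ∧ Q 0 = y ∧ Q k = x ∧
    G.WalksAvoid k P Q ∧ G.AvoidsWalk z k P ∧ G.AvoidsWalk z k Q

/-- `G` contains an anchored invertible pair. -/
def HasAnchoredInvertiblePair (G : LoopGraph V) : Prop :=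
  ∃ z x y, G.ZInvertiblePair z x y

end LoopGraph

/-!
Circular arcs: the circle is modelled as the half-open interval `[0,1)`;
an arc is described by its left and right endpoints (clockwise = increasing),
wrapping around if necessary.
-/

/-- Membership of the point `t` in the clockwise arc from `l` to `r`. -/
def arcMem (l r t : ℝ) : Prop :=
  (l ≤ r ∧ l ≤ t ∧ t ≤ r) ∨ (r < l ∧ (l ≤ t ∨ t ≤ r))

/-- The arc `[l₁,r₁]` is contained in the arc `[l₂,r₂]`. -/
def arcSubset (l₁ r₁ l₂ r₂ : ℝ) : Prop :=
  ∀ t ∈ Set.Ico (0 : ℝ) 1, arcMem l₁ r₁ t → arcMem l₂ r₂ t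

/-- The arc `[lu,ru]` properly contains the arc `[lv,rv]`. -/
def arcProperContains (lu ru lv rv : ℝ) : Prop :=
  arcSubset lv rv lu ru ∧ ¬ arcSubset lu ru lv rv

/-- The arcs `[lu,ru]` and `[lv,rv]` together cover the whole circle. -/
def arcsCover (lu ru lv rv : ℝ) : Prop :=
  ∀ t ∈ Set.Ico (0 : ℝ) 1, arcMem lu ru t ∨ arcMem lv rv t

/-- `b` lies strictly between `a` and `c` in the clockwise cyclic order on `[0,1)`. -/
def cycBtw (a b c : ℝ) : Prop :=
  (a < b ∧ b < c) ∨ (b < c ∧ c < a) ∨ (c < a ∧ a < b)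

/-- The four points `a, b, c, d` of `[0,1)` occur in this clockwise cyclic order. -/
def cyc4 (a b c d : ℝ) : Prop := cycBtw a b c ∧ cycBtw a c d

namespace LoopGraph

variable {V W : Type}

/-- `(l, r)` is a circular-arc representation of `G`: all endpoints are distinct and
two vertices are adjacent iff their arcs intersect. -/
def IsCARep (G : LoopGraph V) (l r : V → ℝ) : Prop :=
  (∀ v, l v ∈ Set.Ico (0 : ℝ) 1) ∧ (∀ v, r v ∈ Set.Ico (0 : ℝ) 1) ∧
  Function.Injective (Sum.elim l r) ∧
  ∀ u v, (G.Adj u v ↔ ∃ t ∈ Set.Ico (0 : ℝ) 1,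
    arcMem (l u) (r u) t ∧ arcMem (l v) (r v) t)

/-- `G` is a circular-arc graph. -/
def IsCircularArc (G : LoopGraph V) : Prop := ∃ l r : V → ℝ, G.IsCARep l r

/-- A normalized circular-arc representation of `G`. -/
def IsNormalizedRep (G : LoopGraph V) (l r : V → ℝ) : Prop :=
  G.IsCARep l r ∧
  ∀ u v, G.Adj u v → u ≠ v →
    (arcProperContains (l u) (r u) (l v) (r v) ↔ G.nbhd v ⊆ G.nbhd u) ∧
    (arcsCover (l u) (r u) (l v) (r v) ↔ G.TwoOverlapEdge u v)

/-- A circular-arc representation of the induced subgraph `G[X]` which is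
normalized with respect to `G`. -/
def IsNormalizedRepOn (G : LoopGraph V) (X : Set V) (l r : V → ℝ) : Prop :=
  (∀ v ∈ X, l v ∈ Set.Ico (0 : ℝ) 1) ∧ (∀ v ∈ X, r v ∈ Set.Ico (0 : ℝ) 1) ∧
  Set.InjOn l X ∧ Set.InjOn r X ∧ (∀ u ∈ X, ∀ v ∈ X, l u ≠ r v) ∧
  (∀ u ∈ X, ∀ v ∈ X,
    (G.Adj u v ↔ ∃ t ∈ Set.Ico (0 : ℝ) 1,
      arcMem (l u) (r u) t ∧ arcMem (l v) (r v) t)) ∧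
  (∀ u ∈ X, ∀ v ∈ X, G.Adj u v → u ≠ v →
    (arcProperContains (l u) (r u) (l v) (r v) ↔ G.nbhd v ⊆ G.nbhd u) ∧
    (arcsCover (l u) (r u) (l v) (r v) ↔ G.TwoOverlapEdge u v))

/-! Circular completions. -/

/-- `f` exhibits `G` as an induced subgraph of `H`. -/
def InducedEmb (G : LoopGraph V) (H : LoopGraph W) (f : V → W) : Prop :=
  Function.Injective f ∧ ∀ u v, (G.Adj u v ↔ H.Adj (f u) (f v))

/-- Every edge of `G` has the same type (inclusion / 1-overlap / 2-overlap)
in `G` and in `H`. -/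
def SameEdgeTypes (G : LoopGraph V) (H : LoopGraph W) (f : V → W) : Prop :=
  ∀ u v, G.Adj u v →
    ((G.InclusionEdge u v ↔ H.InclusionEdge (f u) (f v)) ∧
     (G.OneOverlapEdge u v ↔ H.OneOverlapEdge (f u) (f v)) ∧
     (G.TwoOverlapEdge u v ↔ H.TwoOverlapEdge (f u) (f v)))

/-- `H` (with embedding `f`) is a circular completion of `G`: a circularly-paired
graph with the fewest possible vertices containing `G` as an induced subgraph with
all edge types preserved. -/
def IsCircularCompletion (G : LoopGraph V) (H : LoopGraph W) (f : V → W) : Prop :=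
  Finite W ∧ G.InducedEmb H f ∧ G.SameEdgeTypes H f ∧ H.CircularlyPaired ∧
  ∀ (W' : Type) (H' : LoopGraph W') (f' : V → W'), Finite W' →
    G.InducedEmb H' f' → G.SameEdgeTypes H' f' → H'.CircularlyPaired →
    Nat.card W ≤ Nat.card W'

/-! The anchored Δ-knotting graph. -/

/-- `A(z)`: vertices nonadjacent to `z` or overlapping `z`. -/
def Aset (G : LoopGraph V) (z : V) : Set V := {u | ¬ G.Adj z u ∨ G.Overlaps z u}

/-- `x` and `y` are `uz`-connected. -/
def UZConnected (G : LoopGraph V) (u z x y : V) : Prop :=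
  ¬ G.InclusionEdge x u ∧ ¬ G.InclusionEdge y u ∧ ¬ G.InclusionEdge x z ∧
  ¬ G.InclusionEdge y z ∧ ¬ G.InclusionEdge u z ∧
  ∃ k, ∃ P : ℕ → V, G.IsWalk k P ∧ P 0 = x ∧ P k = y ∧
    G.AvoidsWalk u k P ∧ G.AvoidsWalk z k P

/-- `X` is a `uz`-component: a maximal set of pairwise `uz`-connected vertices. -/
def IsUZComponent (G : LoopGraph V) (u z : V) (X : Set V) : Prop :=
  X.Nonempty ∧ (∀ x ∈ X, ∀ y ∈ X, G.UZConnected u z x y) ∧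
  ∀ Y : Set V, X ⊆ Y → (∀ x ∈ Y, ∀ y ∈ Y, G.UZConnected u z x y) → Y = X

/-- Vertices of the `z`-anchored Δ-knotting graph: copies `(u, X)` of `u ∈ A(z)`,
one for each `uz`-component `X`. -/
def KnotVertex (G : LoopGraph V) (z : V) (p : V × Set V) : Prop :=
  p.1 ∈ G.Aset z ∧ G.IsUZComponent p.1 z p.2

/-- Edges of the `z`-anchored Δ-knotting graph: for each edge `uv` of `G` with
`u, v ∈ A(z)`, an edge between the copy of `u` for `X` and the copy of `v` for `Y`
whenever `v ∈ X` and `u ∈ Y`. -/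
def KnotAdj (G : LoopGraph V) (z : V) (p q : V × Set V) : Prop :=
  G.Adj p.1 q.1 ∧ p.1 ∈ G.Aset z ∧ q.1 ∈ G.Aset z ∧ q.1 ∈ p.2 ∧ p.1 ∈ q.2

/-- The `z`-anchored Δ-knotting graph of `G` is bipartite (it is 2-colourable). -/
def KnotBipartite (G : LoopGraph V) (z : V) : Prop :=
  ∃ c : V × Set V → Bool, ∀ p q, G.KnotVertex z p → G.KnotVertex z q →
    G.KnotAdj z p q → c p ≠ c q

/-! Non-inverting sets. -/

/-- `X` is a non-inverting set of `G`. -/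
def NonInvertingSet (G : LoopGraph V) (X : Set V) : Prop :=
  (∀ u ∈ X, ∀ v ∈ X, ¬ G.TwoOverlapEdge u v) ∧
  ¬ ∃ x ∈ X, ∃ y ∈ X, ∃ k, 0 < k ∧ ∃ P Q : ℕ → V,
      G.IsWalk k P ∧ G.IsWalk k Q ∧ (∀ i ≤ k, P i ∈ X) ∧ (∀ i ≤ k, Q i ∈ X) ∧
      P 0 = x ∧ P k = y ∧ Q 0 = y ∧ Q k = x ∧ G.WalksAvoid k P Q

end LoopGraph

/-!
Edge-labelled graphs: graphs (with loops) in which every edge is labelled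
inclusion or overlap, loops being labelled inclusion.
-/

structure ELGraph (V : Type) where
  Adj : V → V → Prop
  symm : ∀ u v, Adj u v → Adj v u
  refl : ∀ u, Adj u u
  /-- `Ovl u v` means the edge `uv` is labelled as an overlap edge. -/
  Ovl : V → V → Prop
  ovl_symm : ∀ u v, Ovl u v → Ovl v u
  ovl_adj : ∀ u v, Ovl u v → Adj u v
  ovl_irrefl : ∀ u, ¬ Ovl u u

namespace ELGraph

variable {V : Type}

/-- Closed neighbourhood `N[u]`. -/
def nbhd (G : ELGraph V) (u : V) : Set V := {v | G.Adj u v}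

/-- `uv` is (labelled as) an inclusion edge. -/
def InclEdge (G : ELGraph V) (u v : V) : Prop := G.Adj u v ∧ ¬ G.Ovl u v

/-- A walk with `k` edges. -/
def IsWalk (G : ELGraph V) (k : ℕ) (P : ℕ → V) : Prop :=
  ∀ i < k, G.Adj (P i) (P (i + 1))

/-- `z` avoids the edge `ab`: every neighbour of `z` among `a, b` overlaps `z`, and if
`z` overlaps both `a` and `b` then the edge `ab` is an inclusion edge. -/
def AvoidsEdge (G : ELGraph V) (z a b : V) : Prop :=
  (G.Adj z a → G.Ovl z a) ∧ (G.Adj z b → G.Ovl z b) ∧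
  (G.Ovl z a → G.Ovl z b → ¬ G.Ovl a b)

/-- The walks `P` and `Q` (both with `k` edges) avoid each other. -/
def WalksAvoid (G : ELGraph V) (k : ℕ) (P Q : ℕ → V) : Prop :=
  ∀ i < k, G.AvoidsEdge (P i) (Q i) (Q (i + 1)) ∧ G.AvoidsEdge (Q (i + 1)) (P i) (P (i + 1))

/-- The ordered pair `p` is related to the ordered pair `q`: there exist a walk from
`p.1` to `q.1` and a walk from `p.2` to `q.2`, of the same (positive) length, that
avoid each other. -/
def Related (G : ELGraph V) (p q : V × V) : Prop :=
  ∃ k, 0 < k ∧ ∃ P Q : ℕ → V, G.IsWalk k P ∧ G.IsWalk k Q ∧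
    P 0 = p.1 ∧ Q 0 = p.2 ∧ P k = q.1 ∧ Q k = q.2 ∧ G.WalksAvoid k P Q

/-- A Δ-implication class: a maximal set of pairwise related ordered pairs. -/
def IsDeltaClass (G : ELGraph V) (A : Set (V × V)) : Prop :=
  A.Nonempty ∧ (∀ p ∈ A, ∀ q ∈ A, G.Related p q) ∧
  ∀ B : Set (V × V), A ⊆ B → (∀ p ∈ B, ∀ q ∈ B, G.Related p q) → B = A

/-- `A⁻¹ = {(u,v) : (v,u) ∈ A}`. -/
def inv (A : Set (V × V)) : Set (V × V) := {p | p.swap ∈ A}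

/-- `span A`: the set of vertices incident to pairs of `A`. -/
def span (A : Set (V × V)) : Set V := {v | ∃ p ∈ A, v = p.1 ∨ v = p.2}

/-- `S` induces a clique. -/
def IsClique (G : ELGraph V) (S : Set V) : Prop := ∀ a ∈ S, ∀ b ∈ S, G.Adj a b

/-- A Δ-module. -/
def IsDeltaModule (G : ELGraph V) (S : Set V) : Prop :=
  S.Nonempty ∧
  (∀ x, x ∉ S →
    ((∀ s ∈ S, ¬ G.Adj x s) ∨ (∀ s ∈ S, G.InclEdge x s) ∨ (∀ s ∈ S, G.Ovl x s))) ∧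
  (¬ G.IsClique S → ∀ x, x ∉ S → ∀ s ∈ S, ¬ G.Ovl x s)

/-- A trivial Δ-module: the whole vertex set or a single vertex. -/
def TrivialModule (S : Set V) : Prop := S = Set.univ ∨ ∃ a : V, S = {a}

/-- `{a,b}` is a Δ-invertible pair: `(a,b)` is related to `(b,a)`. -/
def DeltaInvertiblePair (G : ELGraph V) (a b : V) : Prop := G.Related (a, b) (b, a)

/-- An interval ordering of an edge-labelled graph. -/
def IsIntervalOrdering (G : ELGraph V) (lt : V → V → Prop) : Prop :=
  IsStrictTotalOrder V lt ∧
  ¬ ∃ a b c, lt a b ∧ lt b c ∧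
    ((¬ G.Adj a b ∧ G.Adj a c) ∨
     (G.InclEdge a b ∧ ¬ G.Adj a c ∧ G.Adj b c) ∨
     (G.Ovl a b ∧ G.Adj a c ∧ ¬ G.Adj b c) ∨
     (G.Ovl a b ∧ G.Ovl b c ∧ G.InclEdge a c) ∨
     (G.InclEdge a b ∧ G.InclEdge b c ∧ G.Ovl a c))

/-- An interval representation of `G` consistent with its labelling. -/
def IsConsistentIntervalRep (G : ELGraph V) (l r : V → ℝ) : Prop :=
  (∀ v, l v ≤ r v) ∧
  (∀ u v, (G.Adj u v ↔ (Set.Icc (l u) (r u) ∩ Set.Icc (l v) (r v)).Nonempty)) ∧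
  (∀ u v, (G.Ovl u v ↔
    ((Set.Icc (l u) (r u) ∩ Set.Icc (l v) (r v)).Nonempty ∧
     ¬ Set.Icc (l u) (r u) ⊆ Set.Icc (l v) (r v) ∧
     ¬ Set.Icc (l v) (r v) ⊆ Set.Icc (l u) (r u))))

/-- A consistently edge-labelled graph: there is a transitive orientation `D` of its
inclusion edges (between distinct vertices) such that `D u v → N[v] ⊆ N[u]`. -/
def ConsistentlyLabelled (G : ELGraph V) : Prop :=
  ∃ D : V → V → Prop,
    (∀ u v, D u v → u ≠ v ∧ G.InclEdge u v) ∧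
    (∀ u v, u ≠ v → G.InclEdge u v → (D u v ↔ ¬ D v u)) ∧
    (∀ u v w, D u v → D v w → D u w) ∧
    (∀ u v, D u v → G.nbhd v ⊆ G.nbhd u)

end ELGraph

/-!
Write `Step p q` when the one-edge walks `p.1 – q.1` and `p.2 – q.2` avoid each other.
Relatedness is the transitive closure of `Step`, so by maximality a class contains every pair
on a `Step`-path between two of its members. In particular a step from a member that keeps
one coordinate fixed stays in the class, since such a step can be reversed.

Suppose `(a,b), (b,c) ∈ D` and follow a `Step`-chain `(b,c) = x₀ → ⋯ → xₙ = (a,b)` inside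
`D`, maintaining `(a, xᵢ.1) ∈ D`. As `D` and `D⁻¹` are disjoint, `(a,y), (y,w) ∈ D` with `a`
adjacent to `w` forces `a, y, w` to overlap pairwise. This makes `(a, xᵢ.2) → (a, xᵢ₊₁.2)` a
step and gives `(a, xᵢ₊₁.1) ∈ D` or already `(a, xᵢ₊₁.2) ∈ D`, so `(a,c)` reaches `D`.
The same argument for the class `D⁻¹` and `(c,b), (b,a)` shows that `(a,c)` is reached from
`D`, hence lies in `D`.
-/

open Relation

namespace ELGraph

variable {V : Type}

def Step (G : ELGraph V) (p q : V × V) : Prop :=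
  G.Adj p.1 q.1 ∧ G.Adj p.2 q.2 ∧ G.AvoidsEdge p.1 p.2 q.2 ∧ G.AvoidsEdge q.2 p.1 q.1

variable {G : ELGraph V} {D D' : Set (V × V)} {p q r : V × V}

lemma step_of_walks {k : ℕ} {P Q : ℕ → V} (hP : G.IsWalk k P) (hQ : G.IsWalk k Q)
    (hPQ : G.WalksAvoid k P Q) {i : ℕ} (hi : i < k) :
    G.Step (P i, Q i) (P (i + 1), Q (i + 1)) :=
  ⟨hP i hi, hQ i hi, (hPQ i hi).1, (hPQ i hi).2⟩

lemma transGen_of_walks {k : ℕ} {P Q : ℕ → V} (hP : G.IsWalk k P) (hQ : G.IsWalk k Q)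
    (hPQ : G.WalksAvoid k P Q) : ∀ i < k, TransGen G.Step (P 0, Q 0) (P (i + 1), Q (i + 1))
  | 0, hi => .single (step_of_walks hP hQ hPQ hi)
  | i + 1, hi => (transGen_of_walks hP hQ hPQ i (by omega)).tail (step_of_walks hP hQ hPQ hi)

lemma isWalk_update {k : ℕ} {P : ℕ → V} {x : V} (hP : G.IsWalk k P) (hx : G.Adj (P k) x) :
    G.IsWalk (k + 1) (Function.update P (k + 1) x) := by
  intro i hi
  rcases Nat.lt_succ_iff_lt_or_eq.1 hi with hi | rfl
  · simpa [Function.update_of_ne (by omega : i ≠ k + 1),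
      Function.update_of_ne (by omega : i + 1 ≠ k + 1)] using hP i hi
  · simpa using hx

lemma walksAvoid_update {k : ℕ} {P Q : ℕ → V} {x y : V} (hPQ : G.WalksAvoid k P Q)
    (hy : G.AvoidsEdge (P k) (Q k) y) (hx : G.AvoidsEdge y (P k) x) :
    G.WalksAvoid (k + 1) (Function.update P (k + 1) x) (Function.update Q (k + 1) y) := by
  intro i hi
  rcases Nat.lt_succ_iff_lt_or_eq.1 hi with hi | rfl
  · simpa [Function.update_of_ne (by omega : i ≠ k + 1),
      Function.update_of_ne (by omega : i + 1 ≠ k + 1)] using hPQ i hi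
  · simpa using And.intro hy hx

lemma related_of_walks_of_step {k : ℕ} {P Q : ℕ → V} (hP : G.IsWalk k P) (hQ : G.IsWalk k Q)
    (hPQ : G.WalksAvoid k P Q) (hs : G.Step (P k, Q k) r) : G.Related (P 0, Q 0) r :=
  ⟨k + 1, k.succ_pos, _, _, isWalk_update hP hs.1, isWalk_update hQ hs.2.1, by simp, by simp,
    by simp, by simp, walksAvoid_update hPQ hs.2.2.1 hs.2.2.2⟩

lemma related_of_step (hs : G.Step p q) : G.Related p q :=
  related_of_walks_of_step (k := 0) (P := fun _ => p.1) (Q := fun _ => p.2)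
    (fun _ h => absurd h (Nat.not_lt_zero _)) (fun _ h => absurd h (Nat.not_lt_zero _))
    (fun _ h => absurd h (Nat.not_lt_zero _)) hs

lemma Related.tail (h : G.Related p q) (hs : G.Step q r) : G.Related p r := by
  obtain ⟨k, -, P, Q, hP, hQ, hP0, hQ0, hPk, hQk, hPQ⟩ := h
  have := related_of_walks_of_step hP hQ hPQ (r := r) (by rwa [hPk, hQk])
  rwa [hP0, hQ0] at this

theorem related_iff_transGen : G.Related p q ↔ TransGen G.Step p q := by
  constructor
  · rintro ⟨k, hk, P, Q, hP, hQ, hP0, hQ0, hPk, hQk, hPQ⟩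
    obtain ⟨k, rfl⟩ := Nat.exists_eq_add_one_of_ne_zero hk.ne'
    have := transGen_of_walks hP hQ hPQ k k.lt_succ_self
    rwa [hP0, hQ0, hPk, hQk] at this
  · intro h
    induction h with
    | single hs => exact related_of_step hs
    | tail _ hs ih => exact ih.tail hs

lemma Related.trans (h₁ : G.Related p q) (h₂ : G.Related q r) : G.Related p r := by
  rw [related_iff_transGen] at *
  exact h₁.trans h₂

lemma avoidsEdge_comm {z x y : V} : G.AvoidsEdge z x y ↔ G.AvoidsEdge z y x :=
  ⟨fun ⟨hx, hy, h⟩ => ⟨hy, hx, fun h₁ h₂ h₃ => h h₂ h₁ (G.ovl_symm _ _ h₃)⟩,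
   fun ⟨hy, hx, h⟩ => ⟨hx, hy, fun h₁ h₂ h₃ => h h₂ h₁ (G.ovl_symm _ _ h₃)⟩⟩

lemma step_swap (h : G.Step p q) : G.Step q.swap p.swap :=
  ⟨G.symm _ _ h.2.1, G.symm _ _ h.1, avoidsEdge_comm.1 h.2.2.2, avoidsEdge_comm.1 h.2.2.1⟩

lemma Related.swap (h : G.Related p q) : G.Related q.swap p.swap := by
  rw [related_iff_transGen] at *
  induction h with
  | single hs => exact .single (step_swap hs)
  | tail _ hs ih => exact ih.head (step_swap hs)

lemma reflTransGen_step_swap (h : ReflTransGen G.Step p q) :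
    ReflTransGen G.Step q.swap p.swap := by
  induction h with
  | refl => rfl
  | tail _ hs ih => exact ih.head (step_swap hs)

lemma ovl_of_adj_of_related_self (h : G.Related p p) : G.Adj p.1 p.2 → G.Ovl p.1 p.2 := by
  obtain ⟨q, hs, -⟩ := TransGen.head'_iff.1 (related_iff_transGen.1 h)
  exact hs.2.2.1.1

lemma avoidsEdge_self {z x : V} (h : G.Adj x z → G.Ovl x z) : G.AvoidsEdge z x x :=
  ⟨fun hzx => G.ovl_symm _ _ (h (G.symm _ _ hzx)), fun hzx => G.ovl_symm _ _ (h (G.symm _ _ hzx)),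
    fun _ _ => G.ovl_irrefl x⟩

lemma step_fst_of_avoidsEdge {m x w : V} (hxw : G.Adj x w) (h : G.AvoidsEdge m x w) :
    G.Step (m, x) (m, w) :=
  ⟨G.refl m, hxw, h, avoidsEdge_self h.2.1⟩

lemma step_snd_of_avoidsEdge {m x w : V} (hxw : G.Adj x w) (h : G.AvoidsEdge m x w) :
    G.Step (x, m) (w, m) :=
  ⟨hxw, G.refl m, avoidsEdge_self h.1, h⟩

lemma mem_inv {A : Set (V × V)} : p ∈ inv A ↔ p.swap ∈ A := Iff.rfl

lemma inv_inv (A : Set (V × V)) : inv (inv A) = A := by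
  ext p
  simp [mem_inv]

lemma pairwise_related_inv {A : Set (V × V)} (h : ∀ p ∈ A, ∀ q ∈ A, G.Related p q) :
    ∀ p ∈ inv A, ∀ q ∈ inv A, G.Related p q :=
  fun p hp q hq => by simpa using (h _ hq _ hp).swap

namespace IsDeltaClass

lemma related (hD : G.IsDeltaClass D) (hp : p ∈ D) (hq : q ∈ D) : G.Related p q :=
  hD.2.1 p hp q hq

lemma mem_of_related (hD : G.IsDeltaClass D) (hp : p ∈ D) (hr : r ∈ D)
    (hpq : G.Related p q) (hqr : G.Related q r) : q ∈ D := by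
  have hq : ∀ s ∈ D, G.Related s q ∧ G.Related q s := fun s hs =>
    ⟨(hD.related hs hp).trans hpq, hqr.trans (hD.related hr hs)⟩
  suffices insert q D = D from this ▸ Set.mem_insert q D
  refine hD.2.2 _ (Set.subset_insert q D) ?_
  rintro s (rfl | hs) t (rfl | ht)
  · exact (hq p hp).2.trans (hq p hp).1
  · exact (hq t ht).2
  · exact (hq s hs).1
  · exact hD.related hs ht

lemma mem_of_reflTransGen (hD : G.IsDeltaClass D) (hp : p ∈ D) (hr : r ∈ D)
    (hpq : ReflTransGen G.Step p q) (hqr : ReflTransGen G.Step q r) : q ∈ D := by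
  rcases reflTransGen_iff_eq_or_transGen.1 hpq with rfl | hpq
  · exact hp
  rcases reflTransGen_iff_eq_or_transGen.1 hqr with rfl | hqr
  · exact hr
  exact hD.mem_of_related hp hr (related_iff_transGen.2 hpq) (related_iff_transGen.2 hqr)

lemma eq_of_mem (hD : G.IsDeltaClass D) (hD' : G.IsDeltaClass D') (hp : p ∈ D) (hp' : p ∈ D') :
    D = D' := by
  have hrel : ∀ s ∈ D ∪ D', G.Related s p ∧ G.Related p s := by
    rintro s (hs | hs)
    · exact ⟨hD.related hs hp, hD.related hp hs⟩
    · exact ⟨hD'.related hs hp', hD'.related hp' hs⟩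
  have hU : ∀ s ∈ D ∪ D', ∀ t ∈ D ∪ D', G.Related s t := fun s hs t ht =>
    (hrel s hs).1.trans (hrel t ht).2
  exact (hD.2.2 _ Set.subset_union_left hU).symm.trans (hD'.2.2 _ Set.subset_union_right hU)

lemma inv (hD : G.IsDeltaClass D) : G.IsDeltaClass (ELGraph.inv D) := by
  obtain ⟨⟨p, hp⟩, hrel, hmax⟩ := hD
  refine ⟨⟨p.swap, by simpa [mem_inv] using hp⟩, pairwise_related_inv hrel, fun B hB hBrel => ?_⟩
  have : ELGraph.inv B = D :=
    hmax _ (fun q hq => hB (by simpa [mem_inv])) (pairwise_related_inv hBrel)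
  rw [← this, inv_inv]

lemma swap_not_mem (hD : G.IsDeltaClass D) (hne : D ≠ ELGraph.inv D) (hp : p ∈ D) : p.swap ∉ D :=
  fun hps => hne (hD.eq_of_mem hD.inv hp hps)

lemma ovl_of_adj (hD : G.IsDeltaClass D) {u v : V} (h : (u, v) ∈ D) : G.Adj u v → G.Ovl u v :=
  ovl_of_adj_of_related_self (hD.related h h)

lemma ovl_of_adj_swap (hD : G.IsDeltaClass D) {u v : V} (h : (u, v) ∈ D) :
    G.Adj v u → G.Ovl v u :=
  fun hvu => G.ovl_symm _ _ (hD.ovl_of_adj h (G.symm _ _ hvu))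

lemma mem_fst_iff (hD : G.IsDeltaClass D) {m x w : V} (hxw : G.Adj x w)
    (h : G.AvoidsEdge m x w) : (m, x) ∈ D ↔ (m, w) ∈ D := by
  have h₁ := related_of_step (step_fst_of_avoidsEdge hxw h)
  have h₂ := related_of_step (step_fst_of_avoidsEdge (G.symm _ _ hxw) (avoidsEdge_comm.1 h))
  exact ⟨fun hx => hD.mem_of_related hx hx h₁ h₂, fun hw => hD.mem_of_related hw hw h₂ h₁⟩

lemma mem_snd_iff (hD : G.IsDeltaClass D) {m x w : V} (hxw : G.Adj x w)
    (h : G.AvoidsEdge m x w) : (x, m) ∈ D ↔ (w, m) ∈ D := by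
  have h₁ := related_of_step (step_snd_of_avoidsEdge hxw h)
  have h₂ := related_of_step (step_snd_of_avoidsEdge (G.symm _ _ hxw) (avoidsEdge_comm.1 h))
  exact ⟨fun hx => hD.mem_of_related hx hx h₁ h₂, fun hw => hD.mem_of_related hw hw h₂ h₁⟩

lemma mem_of_step (hD : G.IsDeltaClass D) {y z y' z' : V} (hs : G.Step (y, z) (y', z'))
    (hyz : (y, z) ∈ D) (hyz' : (y', z') ∈ D) : (y, z') ∈ D :=
  hD.mem_of_related hyz hyz' (related_of_step (step_fst_of_avoidsEdge hs.2.1 hs.2.2.1))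
    (related_of_step (step_snd_of_avoidsEdge hs.1 hs.2.2.2))

lemma ovl_triangle (hD : G.IsDeltaClass D) (hne : D ≠ ELGraph.inv D) {a y w : V}
    (hay : (a, y) ∈ D) (hyw : (y, w) ∈ D) (haw : G.Adj a w) :
    G.Ovl y a ∧ G.Ovl y w ∧ G.Ovl a w := by
  by_contra hno
  have hya : G.AvoidsEdge y a w :=
    ⟨hD.ovl_of_adj_swap hay, hD.ovl_of_adj hyw, fun h₁ h₂ h₃ => hno ⟨h₁, h₂, h₃⟩⟩
  exact hD.swap_not_mem hne hay ((hD.mem_fst_iff haw hya).2 hyw)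

lemma avoidsEdge_of_mem (hD : G.IsDeltaClass D) (hne : D ≠ ELGraph.inv D) {a y z z' : V}
    (hs : G.AvoidsEdge y z z') (hay : (a, y) ∈ D) (hyz : (y, z) ∈ D) (hyz' : (y, z') ∈ D) :
    G.AvoidsEdge a z z' :=
  ⟨fun h => (hD.ovl_triangle hne hay hyz h).2.2, fun h => (hD.ovl_triangle hne hay hyz' h).2.2,
    fun h₁ h₂ => hs.2.2 (hD.ovl_triangle hne hay hyz (G.ovl_adj _ _ h₁)).2.1
      (hD.ovl_triangle hne hay hyz' (G.ovl_adj _ _ h₂)).2.1⟩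

lemma mem_or_mem_of_step (hD : G.IsDeltaClass D) (hne : D ≠ ELGraph.inv D) {a y z y' z' : V}
    (hs : G.Step (y, z) (y', z')) (hay : (a, y) ∈ D) (hyz' : (y', z') ∈ D)
    (hyz'' : (y, z') ∈ D) : (a, y') ∈ D ∨ (a, z') ∈ D := by
  obtain ⟨hyy', -, -, hz'yy'⟩ := hs
  by_cases hayy' : G.AvoidsEdge a y y'
  · exact .inl ((hD.mem_fst_iff hyy' hayy').1 hay)
  right
  have hz'a : G.Adj z' a → G.Ovl z' a := fun h =>
    G.ovl_symm _ _ (hD.ovl_triangle hne hay hyz'' (G.symm _ _ h)).2.2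
  have hay' : G.Adj a y' := by
    by_contra h
    exact hayy' ⟨hD.ovl_of_adj hay, fun h' => absurd h' h, fun _ h' => absurd (G.ovl_adj _ _ h') h⟩
  by_cases hz'ay' : G.AvoidsEdge z' a y'
  · exact (hD.mem_snd_iff hay' hz'ay').2 hyz'
  obtain ⟨-, hz'y', hay'_ovl⟩ : G.Ovl z' a ∧ G.Ovl z' y' ∧ G.Ovl a y' := by
    by_contra h
    exact hz'ay' ⟨hz'a, hz'yy'.2.1, fun h₁ h₂ h₃ => h ⟨h₁, h₂, h₃⟩⟩
  obtain ⟨hay_ovl, hyy'_ovl⟩ : G.Ovl a y ∧ G.Ovl y y' := by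
    by_contra h
    exact hayy' ⟨hD.ovl_of_adj hay, fun _ => hay'_ovl, fun h₁ _ h₃ => h ⟨h₁, h₃⟩⟩
  have hz'y : ¬ G.Adj z' y := fun h => hz'yy'.2.2 (hz'yy'.1 h) hz'y' hyy'_ovl
  have hz'ay : G.AvoidsEdge z' a y :=
    ⟨hz'a, fun h => absurd h hz'y, fun _ h => absurd (G.ovl_adj _ _ h) hz'y⟩
  exact (hD.mem_snd_iff (G.ovl_adj _ _ hay_ovl) hz'ay).2 hyz''

lemma exists_mem_reflTransGen (hD : G.IsDeltaClass D) (hne : D ≠ ELGraph.inv D) {a b c : V}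
    (hab : (a, b) ∈ D) (hbc : (b, c) ∈ D) : ∃ q ∈ D, ReflTransGen G.Step (a, c) q := by
  suffices ∀ x, ReflTransGen G.Step x (a, b) → x ∈ D → (a, x.1) ∈ D →
      ReflTransGen G.Step (a, c) (a, x.2) → ∃ q ∈ D, ReflTransGen G.Step (a, c) q from
    this (b, c) (related_iff_transGen.1 (hD.related hbc hab)).to_reflTransGen hbc hab .refl
  intro x hx
  induction hx using ReflTransGen.head_induction_on with
  | refl => exact fun _ _ h => ⟨(a, b), hab, h⟩
  | head hs hw ih =>
    intro hx hax hac
    have hwD := hD.mem_of_reflTransGen hx hab (.single hs) hw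
    have hx' := hD.mem_of_step hs hx hwD
    have hstep := step_fst_of_avoidsEdge hs.2.1 (hD.avoidsEdge_of_mem hne hs.2.2.1 hax hx hx')
    rcases hD.mem_or_mem_of_step hne hs hax hwD hx' with h | h
    · exact ih hwD h (hac.tail hstep)
    · exact ⟨_, h, hac.tail hstep⟩

end IsDeltaClass

end ELGraph

theorem deltaClass_transitive_general
    {V : Type} (G : ELGraph V) (D : Set (V × V))
    (hD : G.IsDeltaClass D) (hne : D ≠ ELGraph.inv D)
    (a b c : V) (hab : (a, b) ∈ D) (hbc : (b, c) ∈ D) :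
    (a, c) ∈ D := by
  obtain ⟨q, hq, hacq⟩ := hD.exists_mem_reflTransGen hne hab hbc
  have hne' : ELGraph.inv D ≠ ELGraph.inv (ELGraph.inv D) := by
    rw [ELGraph.inv_inv]
    exact hne.symm
  obtain ⟨q', hq', hcaq'⟩ := hD.inv.exists_mem_reflTransGen hne' (a := c) (b := b) (c := a) hbc hab
  exact hD.mem_of_reflTransGen hq' hq (ELGraph.reflTransGen_step_swap hcaq') hacq

/-- A Δ-implication class `D` with `D ≠ D⁻¹` is transitive. -/
theorem deltaClass_transitive
    {V : Type} [Fintype V] (G : ELGraph V) (D : Set (V × V))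
    (hD : G.IsDeltaClass D) (hne : D ≠ ELGraph.inv D)
    (a b c : V) (hab : (a, b) ∈ D) (hbc : (b, c) ∈ D) :
    (a, c) ∈ D :=
  deltaClass_transitive_general G D hD hne a b c hab hbc
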